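/- arXiv:1611.05488 — 3 statements merged into one kernel-verified Lean document; each statement's English description precedes it below -/
import Mathlib

section
/- Let N ≥ 1, let Ω ⊂ ℝ^N be an open set, let λ, γ > 0 and η ≥ 0, let f, g : ℝ → ℝ be C¹ functions with f′ ≥ 0 and g′ ≥ 0, and let u, v : Ω → ℝ be continuous. Suppose there exist functions ζ, χ ∈ C²(Ω) with ζ > 0 and χ > 0 in Ω satisfying −Δζ = λ f′(v) χ + η ζ and −Δχ = γ g′(u) ζ + η χ in Ω. Then for every φ ∈ C_c^∞(Ω), √(λγ) ∫_Ω √(f′(v(x)) g′(u(x))) φ(x)² dx ≤ ∫_Ω |∇φ(x)|² dx. -/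
open MeasureTheory Metric Real Set

noncomputable section

/-- The Euclidean Laplacian `Δw(x) = ∑ i, ∂²w/∂xᵢ²(x)` on `ℝ^N`. -/
def lap {N : ℕ} (w : EuclideanSpace ℝ (Fin N) → ℝ) (x : EuclideanSpace ℝ (Fin N)) : ℝ :=
  ∑ i : Fin N,
    fderiv ℝ (fun y => fderiv ℝ w y (EuclideanSpace.single i 1)) x (EuclideanSpace.single i 1)

/-- `φ` is a smooth compactly supported test function with support inside `Ω`. -/
def IsTestFun {N : ℕ} (Ω : Set (EuclideanSpace ℝ (Fin N)))
    (φ : EuclideanSpace ℝ (Fin N) → ℝ) : Prop :=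
  ContDiff ℝ (⊤ : ℕ∞) φ ∧ HasCompactSupport φ ∧ tsupport φ ⊆ Ω

/-- Stability of a classical solution of `-Δu = λ(v+1)^p, -Δv = γ(u+1)^θ` in `Ω`:
`√(λγpθ) ∫_Ω (v+1)^((p-1)/2) (u+1)^((θ-1)/2) φ² ≤ ∫_Ω |∇φ|²` for all test functions. -/
def IsStable {N : ℕ} (Ω : Set (EuclideanSpace ℝ (Fin N))) (lam gam p θ : ℝ)
    (u v : EuclideanSpace ℝ (Fin N) → ℝ) : Prop :=
  ∀ φ : EuclideanSpace ℝ (Fin N) → ℝ, IsTestFun Ω φ →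
    Real.sqrt (lam * gam * p * θ) *
        ∫ x in Ω, (v x + 1) ^ ((p - 1) / 2) * (u x + 1) ^ ((θ - 1) / 2) * φ x ^ 2
      ≤ ∫ x in Ω, ‖gradient φ x‖ ^ 2

/-- `(u,v)` is a positive classical solution of `-Δu = λ(v+1)^p, -Δv = γ(u+1)^θ` in `Ω`. -/
def IsSolution {N : ℕ} (Ω : Set (EuclideanSpace ℝ (Fin N))) (lam gam p θ : ℝ)
    (u v : EuclideanSpace ℝ (Fin N) → ℝ) : Prop :=
  ContDiffOn ℝ 2 u Ω ∧ ContDiffOn ℝ 2 v Ω ∧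
  (∀ x ∈ Ω, 0 < u x) ∧ (∀ x ∈ Ω, 0 < v x) ∧
  (∀ x ∈ Ω, -lap u x = lam * (v x + 1) ^ p) ∧
  (∀ x ∈ Ω, -lap v x = gam * (u x + 1) ^ θ)

/-- The quartic polynomial `L`. -/
def Lpoly (p θ s : ℝ) : ℝ :=
  s ^ 4 - (16 * p * θ * (p + 1) / (θ + 1)) * s ^ 2
    + (16 * p * θ * (p + 1) * (p + θ + 2) / (θ + 1) ^ 2) * s
    - 16 * p * θ * (p + 1) ^ 2 / (θ + 1) ^ 2

/-! Auxiliary lemmas -/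

lemma integral_fderiv_zero {E : Type*} [NormedAddCommGroup E] [InnerProductSpace ℝ E]
    [FiniteDimensional ℝ E] [MeasurableSpace E] [BorelSpace E]
    (G : E → ℝ) (hG : ContDiff ℝ 1 G) (hGc : HasCompactSupport G) (v : E) :
    ∫ x, fderiv ℝ G x v = 0 := by
  obtain ⟨D, hD⟩ := hG.lipschitzWith_of_hasCompactSupport hGc one_ne_zero
  have h1 : LipschitzWith 0 (fun _ : E => (1:ℝ)) := LipschitzWith.const' 1
  have := LipschitzWith.integral_lineDeriv_mul_eq (μ := volume) h1 hD hGc (-v)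
  have hl : ∀ x : E, lineDeriv ℝ (fun _ : E => (1:ℝ)) x (-v) = 0 := by
    intro x; simp [lineDeriv]
  simp only [hl, zero_mul, integral_zero, mul_one] at this
  have hld : ∀ x : E, lineDeriv ℝ G x (-(-v)) = fderiv ℝ G x v := by
    intro x
    rw [(hG.differentiable one_ne_zero x).lineDeriv_eq_fderiv]
    simp
  simp only [hld] at this
  exact this.symm

lemma fderiv_G {E : Type*} [NormedAddCommGroup E] [InnerProductSpace ℝ E]
    (Ω : Set E) (hΩ : IsOpen Ω) (w φ : E → ℝ)
    (hw : ContDiffOn ℝ 2 w Ω) (hφ : ContDiff ℝ (⊤ : ℕ∞) φ)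
    (hw0 : ∀ y ∈ Ω, w y ≠ 0)
    (x : E) (hx : x ∈ Ω) (e : E) :
    fderiv ℝ (fun y => φ y * φ y * fderiv ℝ w y e / w y) x e =
      (2 * φ x * (fderiv ℝ φ x e) * (fderiv ℝ w x e)
        + φ x * φ x * (fderiv ℝ (fun y => fderiv ℝ w y e) x e)
        - (φ x * φ x * fderiv ℝ w x e / w x) * fderiv ℝ w x e) / w x := by
  have hmem : Ω ∈ nhds x := hΩ.mem_nhds hx
  have hF : ContDiffOn ℝ 1 (fderiv ℝ w) Ω := hw.fderiv_of_isOpen hΩ (by norm_num)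
  have hhd : DifferentiableAt ℝ (fun y => fderiv ℝ w y e) x :=
    (((hF.differentiableOn one_ne_zero).differentiableAt hmem).clm_apply (differentiableAt_const e))
  have hwd : DifferentiableAt ℝ w x :=
    (hw.differentiableOn (by norm_num)).differentiableAt hmem
  have hφd : DifferentiableAt ℝ φ x := (hφ.differentiable (by simp)) x
  set G : E → ℝ := fun y => φ y * φ y * fderiv ℝ w y e / w y with hG
  have hGd : DifferentiableAt ℝ G x := by
    simp only [hG, div_eq_mul_inv]
    exact ((hφd.mul hφd).mul hhd).mul (hwd.inv (hw0 x hx))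
  have hnum : HasFDerivAt (fun y => φ y * φ y * fderiv ℝ w y e)
      ((φ x * φ x) • fderiv ℝ (fun y => fderiv ℝ w y e) x
        + (fderiv ℝ w x e) • (φ x • fderiv ℝ φ x + φ x • fderiv ℝ φ x)) x :=
    (hφd.hasFDerivAt.mul hφd.hasFDerivAt).mul hhd.hasFDerivAt
  have heq : (fun y => G y * w y) =ᶠ[nhds x] (fun y => φ y * φ y * fderiv ℝ w y e) := by
    filter_upwards [hmem] with y hy
    simp only [hG]
    field_simp [hw0 y hy]
  have hprod : fderiv ℝ (fun y => G y * w y) x = G x • fderiv ℝ w x + w x • fderiv ℝ G x :=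
    (hGd.hasFDerivAt.mul hwd.hasFDerivAt).fderiv
  have h2 : G x • fderiv ℝ w x + w x • fderiv ℝ G x
      = (φ x * φ x) • fderiv ℝ (fun y => fderiv ℝ w y e) x
        + (fderiv ℝ w x e) • (φ x • fderiv ℝ φ x + φ x • fderiv ℝ φ x) := by
    rw [← hprod, heq.fderiv_eq, hnum.fderiv]
  have h3 := congrArg (fun (L : E →L[ℝ] ℝ) => L e) h2
  simp only [ContinuousLinearMap.add_apply, ContinuousLinearMap.coe_smul', Pi.smul_apply,
    smul_eq_mul] at h3
  have hwx := hw0 x hx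
  have hGx : G x = φ x * φ x * fderiv ℝ w x e / w x := rfl
  rw [hGx] at h3
  field_simp at h3 ⊢
  linear_combination h3

lemma term_ineq (p q r f wv : ℝ) (hw : 0 < wv) :
    -(r / wv * f ^ 2) + (2 * f * p * q + f * f * r - f * f * q / wv * q) / wv ≤ p ^ 2 := by
  have hwne : wv ≠ 0 := hw.ne'
  have hkey : -(r / wv * f ^ 2) + (2 * f * p * q + f * f * r - f * f * q / wv * q) / wv
      = 2 * p * (f * q / wv) - (f * q / wv) ^ 2 := by
    field_simp
    ring
  rw [hkey]
  nlinarith [sq_nonneg (p - f * q / wv)]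

lemma grad_sq {N : ℕ} (φ : EuclideanSpace ℝ (Fin N) → ℝ) (x : EuclideanSpace ℝ (Fin N)) :
    ‖gradient φ x‖ ^ 2 = ∑ i, (fderiv ℝ φ x (EuclideanSpace.single i 1)) ^ 2 := by
  have h1 : ‖gradient φ x‖ ^ 2 = ∑ i, (gradient φ x i) ^ 2 := by
    rw [EuclideanSpace.norm_eq, Real.sq_sqrt (by positivity)]
    simp [sq_abs]
  rw [h1]
  apply Finset.sum_congr rfl
  intro i _
  congr 1
  have := EuclideanSpace.inner_single_left (𝕜 := ℝ) i 1 (gradient φ x)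
  rw [real_inner_comm] at this
  simp [gradient, InnerProductSpace.toDual_symm_apply] at this
  simpa [gradient] using this.symm

lemma integrableOn_of_compl_support {N : ℕ} {Ω K : Set (EuclideanSpace ℝ (Fin N))}
    (hΩ : IsOpen Ω) (hK : IsCompact K) (hKΩ : K ⊆ Ω)
    {f : EuclideanSpace ℝ (Fin N) → ℝ} (hf : ContinuousOn f Ω)
    (h0 : ∀ x ∉ K, f x = 0) : IntegrableOn f Ω := by
  have h1 : IntegrableOn f K := (hf.mono hKΩ).integrableOn_compact hK
  have h2 : IntegrableOn f (Ω \ K) := by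
    exact (integrableOn_zero).congr_fun (fun x hx => (h0 x hx.2).symm)
      (hΩ.measurableSet.diff hK.measurableSet)
  exact (h1.union h2).mono_set (fun x hx => by
    by_cases hxK : x ∈ K
    · exact Or.inl hxK
    · exact Or.inr ⟨hx, hxK⟩)

/-- Key lemma: if `w > 0` is `C²` on `Ω` and `ρ ≤ -Δw/w` on `Ω`, then
`∫ ρ φ² ≤ ∫ |∇φ|²` for test functions `φ`. -/
lemma key_lemma {N : ℕ} (Ω : Set (EuclideanSpace ℝ (Fin N))) (hΩ : IsOpen Ω)
    (w : EuclideanSpace ℝ (Fin N) → ℝ)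
    (hw : ContDiffOn ℝ 2 w Ω) (hwpos : ∀ x ∈ Ω, 0 < w x)
    (ρ : EuclideanSpace ℝ (Fin N) → ℝ)
    (φ : EuclideanSpace ℝ (Fin N) → ℝ)
    (hφ : ContDiff ℝ (⊤ : ℕ∞) φ) (hφc : HasCompactSupport φ) (hφs : tsupport φ ⊆ Ω)
    (hρint : IntegrableOn (fun x => ρ x * φ x ^ 2) Ω)
    (hρ : ∀ x ∈ Ω, ρ x ≤ -lap w x / w x) :
    ∫ x in Ω, ρ x * φ x ^ 2 ≤ ∫ x in Ω, ‖gradient φ x‖ ^ 2 := by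
  classical
  set K := tsupport φ with hKdef
  have hK : IsCompact K := hφc
  have hKc : IsClosed K := isClosed_tsupport φ
  have hw0 : ∀ y ∈ Ω, w y ≠ 0 := fun y hy => (hwpos y hy).ne'
  set e : Fin N → EuclideanSpace ℝ (Fin N) := fun i => EuclideanSpace.single i 1 with he
  set G : Fin N → EuclideanSpace ℝ (Fin N) → ℝ :=
    fun i y => φ y * φ y * fderiv ℝ w y (e i) / w y with hGdef
  have hφ0 : ∀ x ∉ K, φ x = 0 := fun x hx => image_eq_zero_of_notMem_tsupport hx
  have hGzero : ∀ i, ∀ x ∉ K, G i x = 0 := by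
    intro i x hx; simp [hGdef, hφ0 x hx]
  -- G i is C¹ on Ω
  have hGΩ : ∀ i, ContDiffOn ℝ 1 (G i) Ω := by
    intro i
    have hφ1 : ContDiffOn ℝ 1 φ Ω := (hφ.of_le (by simp)).contDiffOn
    have hF : ContDiffOn ℝ 1 (fderiv ℝ w) Ω := hw.fderiv_of_isOpen hΩ (by norm_num)
    have hh : ContDiffOn ℝ 1 (fun y => fderiv ℝ w y (e i)) Ω :=
      hF.clm_apply contDiffOn_const
    exact ((hφ1.mul hφ1).mul hh).div (hw.of_le (by norm_num)) hw0
  -- G i is C¹ globally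
  have hGc : ∀ i, ContDiff ℝ 1 (G i) := by
    intro i
    rw [contDiff_iff_contDiffAt]
    intro x
    by_cases hx : x ∈ Ω
    · exact (hGΩ i).contDiffAt (hΩ.mem_nhds hx)
    · have hxK : x ∈ Kᶜ := fun hxK => hx (hφs hxK)
      apply ContDiffAt.congr_of_eventuallyEq (contDiffAt_const (c := (0:ℝ)))
      filter_upwards [hKc.isOpen_compl.mem_nhds hxK] with y hy
      exact hGzero i y hy
  have hGsupp : ∀ i, HasCompactSupport (G i) :=
    fun i => HasCompactSupport.intro hK (hGzero i)
  have htsuppG : ∀ i, tsupport (G i) ⊆ K := by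
    intro i
    apply closure_minimal _ hKc
    intro x hx
    by_contra hxK
    exact hx (hGzero i x hxK)
  -- the divergence function
  set D : EuclideanSpace ℝ (Fin N) → ℝ :=
    fun x => ∑ i, fderiv ℝ (G i) x (e i) with hDdef
  have hDizero : ∀ i, ∀ x ∉ K, fderiv ℝ (G i) x (e i) = 0 := by
    intro i x hx
    have h1 : x ∉ tsupport (G i) := fun h => hx (htsuppG i h)
    have h2 : fderiv ℝ (G i) x = 0 :=
      Function.notMem_support.mp (fun h => h1 (support_fderiv_subset ℝ h))
    simp [h2]
  have hDicont : ∀ i, Continuous (fun x => fderiv ℝ (G i) x (e i)) := by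
    intro i
    exact ((hGc i).continuous_fderiv one_ne_zero).clm_apply continuous_const
  have hDiint : ∀ i, Integrable (fun x => fderiv ℝ (G i) x (e i)) := by
    intro i
    exact (hDicont i).integrable_of_hasCompactSupport
      (HasCompactSupport.intro hK (hDizero i))
  have hDcont : Continuous D := by
    apply continuous_finset_sum
    intro i _; exact hDicont i
  have hDzero : ∀ x ∉ K, D x = 0 := by
    intro x hx
    simp only [hDdef]
    exact Finset.sum_eq_zero (fun i _ => hDizero i x hx)
  have hDint : Integrable D :=
    hDcont.integrable_of_hasCompactSupport (HasCompactSupport.intro hK hDzero)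
  -- total integral of D is zero
  have hDtotal : ∫ x, D x = 0 := by
    rw [hDdef]
    rw [integral_finset_sum _ (fun i _ => hDiint i)]
    apply Finset.sum_eq_zero
    intro i _
    exact integral_fderiv_zero (G i) (hGc i) (hGsupp i) (e i)
  have hDset : ∫ x in Ω, D x = 0 := by
    rw [setIntegral_eq_integral_of_forall_compl_eq_zero
      (fun x hx => hDzero x (fun hxK => hx (hφs hxK)))]
    exact hDtotal
  -- the energy density
  have hAcont : Continuous (fun x => ‖gradient φ x‖ ^ 2) := by
    have hg : Continuous (fun x => gradient φ x) :=
      (InnerProductSpace.toDual ℝ (EuclideanSpace ℝ (Fin N))).symm.continuous.comp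
        (hφ.continuous_fderiv (by simp))
    exact (hg.norm).pow 2
  have hAzero : ∀ x ∉ K, ‖gradient φ x‖ ^ 2 = 0 := by
    intro x hx
    have h1 : fderiv ℝ φ x = 0 :=
      Function.notMem_support.mp (fun h => hx (support_fderiv_subset ℝ h))
    simp [gradient, h1]
  have hAint : IntegrableOn (fun x => ‖gradient φ x‖ ^ 2) Ω :=
    (hAcont.integrable_of_hasCompactSupport
      (HasCompactSupport.intro hK hAzero)).integrableOn
  have hADint : IntegrableOn (fun x => ‖gradient φ x‖ ^ 2 - D x) Ω :=
    hAint.sub hDint.integrableOn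
  -- pointwise inequality on Ω
  have hpoint : ∀ x ∈ Ω, ρ x * φ x ^ 2 ≤ ‖gradient φ x‖ ^ 2 - D x := by
    intro x hx
    have hwx := hwpos x hx
    have hDx : D x = ∑ i, (2 * φ x * (fderiv ℝ φ x (e i)) * (fderiv ℝ w x (e i))
        + φ x * φ x * (fderiv ℝ (fun y => fderiv ℝ w y (e i)) x (e i))
        - (φ x * φ x * fderiv ℝ w x (e i) / w x) * fderiv ℝ w x (e i)) / w x :=
      Finset.sum_congr rfl (fun i _ => fderiv_G Ω hΩ w φ hw hφ hw0 x hx (e i))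
    have hlap : lap w x = ∑ i, fderiv ℝ (fun y => fderiv ℝ w y (e i)) x (e i) := rfl
    have hsum : (-lap w x / w x) * φ x ^ 2 + D x ≤ ‖gradient φ x‖ ^ 2 := by
      rw [grad_sq φ x, hDx, hlap, neg_div, Finset.sum_div, neg_mul, Finset.sum_mul,
        ← Finset.sum_neg_distrib, ← Finset.sum_add_distrib]
      apply Finset.sum_le_sum
      intro i _
      exact term_ineq (fderiv ℝ φ x (e i)) (fderiv ℝ w x (e i))
        (fderiv ℝ (fun y => fderiv ℝ w y (e i)) x (e i)) (φ x) (w x) hwx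
    have hρx : ρ x * φ x ^ 2 ≤ (-lap w x / w x) * φ x ^ 2 :=
      mul_le_mul_of_nonneg_right (hρ x hx) (sq_nonneg _)
    linarith
  calc ∫ x in Ω, ρ x * φ x ^ 2
      ≤ ∫ x in Ω, (‖gradient φ x‖ ^ 2 - D x) :=
        setIntegral_mono_on hρint hADint hΩ.measurableSet hpoint
    _ = (∫ x in Ω, ‖gradient φ x‖ ^ 2) - ∫ x in Ω, D x :=
        integral_sub hAint hDint.integrableOn
    _ = ∫ x in Ω, ‖gradient φ x‖ ^ 2 := by rw [hDset, sub_zero]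

/-- the stability inequality derived from the linearized system. -/
theorem stmt2 {N : ℕ} (hN : 1 ≤ N) (Ω : Set (EuclideanSpace ℝ (Fin N))) (hΩ : IsOpen Ω)
    (lam gam η : ℝ) (hlam : 0 < lam) (hgam : 0 < gam) (hη : 0 ≤ η)
    (f g : ℝ → ℝ) (hf : ContDiff ℝ 1 f) (hg : ContDiff ℝ 1 g)
    (hf' : ∀ t : ℝ, 0 ≤ deriv f t) (hg' : ∀ t : ℝ, 0 ≤ deriv g t)
    (u v : EuclideanSpace ℝ (Fin N) → ℝ)
    (hu : ContinuousOn u Ω) (hv : ContinuousOn v Ω)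
    (ζ χ : EuclideanSpace ℝ (Fin N) → ℝ)
    (hζ : ContDiffOn ℝ 2 ζ Ω) (hχ : ContDiffOn ℝ 2 χ Ω)
    (hζpos : ∀ x ∈ Ω, 0 < ζ x) (hχpos : ∀ x ∈ Ω, 0 < χ x)
    (heq1 : ∀ x ∈ Ω, -lap ζ x = lam * deriv f (v x) * χ x + η * ζ x)
    (heq2 : ∀ x ∈ Ω, -lap χ x = gam * deriv g (u x) * ζ x + η * χ x) :
    ∀ φ : EuclideanSpace ℝ (Fin N) → ℝ,
      ContDiff ℝ (⊤ : ℕ∞) φ → HasCompactSupport φ → tsupport φ ⊆ Ω →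
      Real.sqrt (lam * gam) *
          ∫ x in Ω, Real.sqrt (deriv f (v x) * deriv g (u x)) * φ x ^ 2
        ≤ ∫ x in Ω, ‖gradient φ x‖ ^ 2 := by
  intro φ hφ hφc hφs
  classical
  set K := tsupport φ with hKdef
  have hK : IsCompact K := hφc
  have hKΩ : K ⊆ Ω := hφs
  have hφ0 : ∀ x ∉ K, φ x = 0 := fun x hx => image_eq_zero_of_notMem_tsupport hx
  have hζ0 : ∀ x ∈ Ω, ζ x ≠ 0 := fun x hx => (hζpos x hx).ne'
  have hχ0 : ∀ x ∈ Ω, χ x ≠ 0 := fun x hx => (hχpos x hx).ne'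
  set σ₁ : EuclideanSpace ℝ (Fin N) → ℝ :=
    fun x => lam * deriv f (v x) * χ x / ζ x + η with hσ₁def
  set σ₂ : EuclideanSpace ℝ (Fin N) → ℝ :=
    fun x => gam * deriv g (u x) * ζ x / χ x + η with hσ₂def
  -- continuity facts
  have hcf : ContinuousOn (fun x => deriv f (v x)) Ω :=
    (hf.continuous_deriv le_rfl).comp_continuousOn hv
  have hcg : ContinuousOn (fun x => deriv g (u x)) Ω :=
    (hg.continuous_deriv le_rfl).comp_continuousOn hu
  have hφ2 : Continuous (fun x => φ x ^ 2) := (hφ.continuous).pow 2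
  have hσ₁c : ContinuousOn σ₁ Ω :=
    (((continuousOn_const.mul hcf).mul hχ.continuousOn).div hζ.continuousOn hζ0).add
      continuousOn_const
  have hσ₂c : ContinuousOn σ₂ Ω :=
    (((continuousOn_const.mul hcg).mul hζ.continuousOn).div hχ.continuousOn hχ0).add
      continuousOn_const
  -- integrability
  have hint₁ : IntegrableOn (fun x => σ₁ x * φ x ^ 2) Ω := by
    apply integrableOn_of_compl_support hΩ hK hKΩ (hσ₁c.mul hφ2.continuousOn)
    intro x hx; simp [hφ0 x hx]
  have hint₂ : IntegrableOn (fun x => σ₂ x * φ x ^ 2) Ω := by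
    apply integrableOn_of_compl_support hΩ hK hKΩ (hσ₂c.mul hφ2.continuousOn)
    intro x hx; simp [hφ0 x hx]
  have hintρ : IntegrableOn
      (fun x => Real.sqrt (lam * gam) * Real.sqrt (deriv f (v x) * deriv g (u x)) * φ x ^ 2) Ω := by
    apply integrableOn_of_compl_support hΩ hK hKΩ
    · exact (continuousOn_const.mul
        (Real.continuous_sqrt.comp_continuousOn (hcf.mul hcg))).mul hφ2.continuousOn
    · intro x hx; simp [hφ0 x hx]
  -- the two applications of the key lemma
  have I1 : ∫ x in Ω, σ₁ x * φ x ^ 2 ≤ ∫ x in Ω, ‖gradient φ x‖ ^ 2 := by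
    apply key_lemma Ω hΩ ζ hζ hζpos σ₁ φ hφ hφc hφs hint₁
    intro x hx
    have : -lap ζ x / ζ x = lam * deriv f (v x) * χ x / ζ x + η := by
      rw [heq1 x hx]
      field_simp [hζ0 x hx]
    exact this.symm.le
  have I2 : ∫ x in Ω, σ₂ x * φ x ^ 2 ≤ ∫ x in Ω, ‖gradient φ x‖ ^ 2 := by
    apply key_lemma Ω hΩ χ hχ hχpos σ₂ φ hφ hφc hφs hint₂
    intro x hx
    have : -lap χ x / χ x = gam * deriv g (u x) * ζ x / χ x + η := by
      rw [heq2 x hx]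
      field_simp [hχ0 x hx]
    exact this.symm.le
  -- pointwise AM-GM
  have hpoint : ∀ x ∈ Ω,
      Real.sqrt (lam * gam) * Real.sqrt (deriv f (v x) * deriv g (u x)) * φ x ^ 2
        ≤ σ₁ x * φ x ^ 2 / 2 + σ₂ x * φ x ^ 2 / 2 := by
    intro x hx
    have hmain : Real.sqrt (lam * gam) * Real.sqrt (deriv f (v x) * deriv g (u x))
        ≤ (σ₁ x + σ₂ x) / 2 := by
      set a : ℝ := lam * deriv f (v x) * χ x / ζ x with hadef
      set b : ℝ := gam * deriv g (u x) * ζ x / χ x with hbdef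
      have ha : 0 ≤ a :=
        div_nonneg (mul_nonneg (mul_nonneg hlam.le (hf' _)) (hχpos x hx).le) (hζpos x hx).le
      have hb : 0 ≤ b :=
        div_nonneg (mul_nonneg (mul_nonneg hgam.le (hg' _)) (hζpos x hx).le) (hχpos x hx).le
      have hab : a * b = lam * gam * (deriv f (v x) * deriv g (u x)) := by
        rw [hadef, hbdef]
        field_simp [hζ0 x hx, hχ0 x hx]
      have hρeq : Real.sqrt (lam * gam) * Real.sqrt (deriv f (v x) * deriv g (u x))
          = Real.sqrt a * Real.sqrt b := by
        rw [← Real.sqrt_mul (by positivity), ← hab, Real.sqrt_mul ha]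
      rw [hρeq]
      have hσ : (σ₁ x + σ₂ x) / 2 = (a + b) / 2 + η := by
        simp only [hσ₁def, hσ₂def]; ring
      rw [hσ]
      nlinarith [sq_nonneg (Real.sqrt a - Real.sqrt b), Real.sq_sqrt ha, Real.sq_sqrt hb,
        Real.sqrt_nonneg a, Real.sqrt_nonneg b]
    have hφsq : (0:ℝ) ≤ φ x ^ 2 := sq_nonneg _
    nlinarith [mul_le_mul_of_nonneg_right hmain hφsq]
  -- combine
  have hmono : ∫ x in Ω, Real.sqrt (lam * gam) * Real.sqrt (deriv f (v x) * deriv g (u x)) * φ x ^ 2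
      ≤ ∫ x in Ω, (σ₁ x * φ x ^ 2 / 2 + σ₂ x * φ x ^ 2 / 2) :=
    setIntegral_mono_on hintρ ((hint₁.div_const 2).add (hint₂.div_const 2))
      hΩ.measurableSet hpoint
  have hsplit : ∫ x in Ω, (σ₁ x * φ x ^ 2 / 2 + σ₂ x * φ x ^ 2 / 2)
      = (∫ x in Ω, σ₁ x * φ x ^ 2) / 2 + (∫ x in Ω, σ₂ x * φ x ^ 2) / 2 := by
    rw [integral_add (hint₁.div_const 2) (hint₂.div_const 2), integral_div, integral_div]
  have hLHS : Real.sqrt (lam * gam) *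
      ∫ x in Ω, Real.sqrt (deriv f (v x) * deriv g (u x)) * φ x ^ 2
      = ∫ x in Ω, Real.sqrt (lam * gam) * Real.sqrt (deriv f (v x) * deriv g (u x)) * φ x ^ 2 := by
    rw [← integral_const_mul]
    congr 1
    ext x
    ring
  rw [hLHS]
  calc ∫ x in Ω, Real.sqrt (lam * gam) * Real.sqrt (deriv f (v x) * deriv g (u x)) * φ x ^ 2
      ≤ ∫ x in Ω, (σ₁ x * φ x ^ 2 / 2 + σ₂ x * φ x ^ 2 / 2) := hmono
    _ = (∫ x in Ω, σ₁ x * φ x ^ 2) / 2 + (∫ x in Ω, σ₂ x * φ x ^ 2) / 2 := hsplit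
    _ ≤ (∫ x in Ω, ‖gradient φ x‖ ^ 2) / 2 + (∫ x in Ω, ‖gradient φ x‖ ^ 2) / 2 := by
        gcongr
    _ = ∫ x in Ω, ‖gradient φ x‖ ^ 2 := by ring
end
end

section
/- Let N ≥ 1, let Ω ⊂ ℝ^N be a bounded open set, let λ, γ > 0 and θ ≥ p > 1. Let u, v ∈ C²(Ω) ∩ C(closure Ω) be nonnegative in Ω, vanish on ∂Ω, and satisfy −Δu = λ(v+1)^p and −Δv = γ(u+1)^θ in Ω. Set α := max{0, (γ(p+1)/(λ(θ+1)))^{1/(p+1)} − 1}. Then (v(x)+1+α)^{p+1} ≥ (γ(p+1)/(λ(θ+1))) (u(x)+1)^{θ+1} for every x ∈ Ω. -/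
open MeasureTheory Metric Real Set

noncomputable section

open Filter

section aux

variable {N : ℕ}

local notation "E" => EuclideanSpace ℝ (Fin N)

lemma second_deriv_test {g g' : ℝ → ℝ} {c : ℝ}
    (hg : ∀ᶠ t in nhds (0:ℝ), HasDerivAt g (g' t) t)
    (hmax : IsLocalMax g 0) (hc : HasDerivAt g' c 0) : c ≤ 0 := by
  by_contra hpos
  push_neg at hpos
  have h0 : g' 0 = 0 := hmax.hasDerivAt_eq_zero hg.self_of_nhds
  have hslope : Filter.Tendsto (slope g' 0) (nhdsWithin 0 {(0:ℝ)}ᶜ) (nhds c) :=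
    hasDerivAt_iff_tendsto_slope.1 hc
  have h1 : ∀ᶠ t in nhds (0:ℝ), 0 < t → 0 < g' t := by
    have h2 : ∀ᶠ t in nhdsWithin (0:ℝ) {(0:ℝ)}ᶜ, 0 < slope g' 0 t :=
      hslope.eventually (eventually_gt_nhds hpos)
    rw [eventually_nhdsWithin_iff] at h2
    filter_upwards [h2] with t ht htpos
    have hs := ht (by simpa using ne_of_gt htpos)
    rw [slope_def_field, h0] at hs
    have := mul_pos hs htpos
    rwa [sub_zero, sub_zero, div_mul_cancel₀ _ (ne_of_gt htpos)] at this
  have hmax' : ∀ᶠ t in nhds (0:ℝ), g t ≤ g 0 := hmax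
  obtain ⟨ε, hε, hall⟩ := Metric.eventually_nhds_iff.1 ((hg.and hmax').and h1)
  set b := ε / 2 with hbdef
  have hb : 0 < b := by positivity
  have hmem : ∀ t ∈ Set.Icc (0:ℝ) b,
      (HasDerivAt g (g' t) t ∧ g t ≤ g 0) ∧ (0 < t → 0 < g' t) := by
    intro t ht
    apply hall
    rw [Real.dist_eq, sub_zero, abs_of_nonneg ht.1]
    calc t ≤ b := ht.2
    _ < ε := by rw [hbdef]; linarith
  obtain ⟨ξ, hξ, heq⟩ := exists_hasDerivAt_eq_slope g g' hb
    (fun t ht => ((hmem t ht).1.1.continuousAt).continuousWithinAt)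
    (fun t ht => (hmem t (Set.mem_Icc_of_Ioo ht)).1.1)
  have hgb : g b ≤ g 0 := (hmem b ⟨le_of_lt hb, le_refl b⟩).1.2
  have h3 : g' ξ ≤ 0 := by
    rw [heq]
    apply div_nonpos_of_nonpos_of_nonneg <;> [linarith; linarith]
  have h4 : 0 < g' ξ := (hmem ξ (Set.mem_Icc_of_Ioo hξ)).2 hξ.1
  linarith

lemma lap_eq_sum {w : E → ℝ} {x : E} {G : E → E →L[ℝ] ℝ}
    (hG : ∀ᶠ y in nhds x, HasFDerivAt w (G y) y)
    {G' : Fin N → E →L[ℝ] ℝ}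
    (hG' : ∀ i, HasFDerivAt (fun y => G y (EuclideanSpace.single i 1)) (G' i) x) :
    lap w x = ∑ i, G' i (EuclideanSpace.single i 1) := by
  unfold lap
  refine Finset.sum_congr rfl fun i _ => ?_
  have h1 : (fun y => fderiv ℝ w y (EuclideanSpace.single i 1)) =ᶠ[nhds x]
      (fun y => G y (EuclideanSpace.single i 1)) := by
    filter_upwards [hG] with y hy
    rw [hy.fderiv]
  rw [h1.fderiv_eq, (hG' i).fderiv]

lemma ev_hasFDerivAt {w : E → ℝ} {x : E} (hw : ContDiffAt ℝ 2 w x) :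
    ∀ᶠ y in nhds x, HasFDerivAt w (fderiv ℝ w y) y := by
  obtain ⟨U, hU, hWU⟩ := hw.contDiffOn (le_refl 2) (by simp)
  have h2 : ∀ᶠ y in nhds x, U ∈ nhds y := eventually_mem_nhds_iff.2 hU
  filter_upwards [h2] with y hy
  exact ((hWU.contDiffAt hy).differentiableAt two_ne_zero).hasFDerivAt

lemma diff_fderiv {w : E → ℝ} {x : E} (hw : ContDiffAt ℝ 2 w x) :
    DifferentiableAt ℝ (fderiv ℝ w) x :=
  (hw.fderiv_right (m := 1) (by norm_num)).differentiableAt one_ne_zero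

lemma hasFDerivAt_fderiv_apply {w : E → ℝ} {x : E} (hw : ContDiffAt ℝ 2 w x) (e : E) :
    HasFDerivAt (fun y => fderiv ℝ w y e)
      ((ContinuousLinearMap.apply ℝ ℝ e).comp (fderiv ℝ (fderiv ℝ w) x)) x :=
  (ContinuousLinearMap.apply ℝ ℝ e).hasFDerivAt.comp x (diff_fderiv hw).hasFDerivAt

lemma lap_eq_second {w : E → ℝ} {x : E} (hw : ContDiffAt ℝ 2 w x) :
    lap w x
      = ∑ i, fderiv ℝ (fderiv ℝ w) x (EuclideanSpace.single i 1) (EuclideanSpace.single i 1) := by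
  rw [lap_eq_sum (ev_hasFDerivAt hw) (fun i => hasFDerivAt_fderiv_apply hw (EuclideanSpace.single i 1))]
  rfl


lemma lap_nonpos_of_isLocalMax {w : E → ℝ} {x : E} (hw : ContDiffAt ℝ 2 w x)
    (hmax : IsLocalMax w x) : lap w x ≤ 0 := by
  rw [lap_eq_second hw]
  apply Finset.sum_nonpos
  intro i _
  set e : EuclideanSpace ℝ (Fin N) := EuclideanSpace.single i 1 with he
  have hline : Continuous fun t : ℝ => x + t • e := by continuity
  have hl0 : (fun t : ℝ => x + t • e) 0 = x := by simp
  have hld : ∀ t : ℝ, HasDerivAt (fun s : ℝ => x + s • e) e t := fun t => by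
    simpa using ((hasDerivAt_id t).smul_const e).const_add x
  have htend : Filter.Tendsto (fun t : ℝ => x + t • e) (nhds 0) (nhds x) := by
    have h := (hline.continuousAt (x := (0:ℝ))).tendsto
    simpa using h
  have hev : ∀ᶠ t in nhds (0:ℝ), HasFDerivAt w (fderiv ℝ w (x + t • e)) (x + t • e) :=
    htend.eventually (ev_hasFDerivAt hw)
  have hg : ∀ᶠ t in nhds (0:ℝ),
      HasDerivAt (fun s => w (x + s • e)) (fderiv ℝ w (x + t • e) e) t := by
    filter_upwards [hev] with t ht
    exact ht.comp_hasDerivAt t (hld t)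
  have hgmax : IsLocalMax (fun t : ℝ => w (x + t • e)) 0 := by
    have h : IsLocalMax w ((fun t : ℝ => x + t • e) 0) := by rwa [hl0]
    exact IsLocalMax.comp_continuous (g := fun t : ℝ => x + t • e) (b := (0:ℝ)) h
      hline.continuousAt
  have hc : HasDerivAt (fun t : ℝ => fderiv ℝ w (x + t • e) e)
      (fderiv ℝ (fderiv ℝ w) x e e) 0 := by
    have h1 := hasFDerivAt_fderiv_apply hw e
    rw [← hl0] at h1
    simpa [Function.comp_def] using h1.comp_hasDerivAt 0 (hld 0)
  exact second_deriv_test hg hgmax hc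


lemma hasFDerivAt_quad (ε : ℝ) (y : E) :
    HasFDerivAt (fun z : E => ε * @inner ℝ _ _ z z) ((2 * ε) • (innerSL ℝ y)) y := by
  have h := ((hasFDerivAt_id y).inner ℝ (hasFDerivAt_id y)).const_mul ε
  refine h.congr_fderiv ?_
  ext z
  simp only [ContinuousLinearMap.smul_apply, innerSL_apply_apply, smul_eq_mul,
    ContinuousLinearMap.comp_apply, ContinuousLinearMap.prod_apply,
    ContinuousLinearMap.coe_id', id_eq, fderivInnerCLM_apply, real_inner_comm]
  ring

lemma lap_perturb {w : E → ℝ} {x : E} (hw : ContDiffAt ℝ 2 w x) (ε : ℝ) :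
    lap (fun y => w y + ε * @inner ℝ _ _ y y) x = lap w x + ε * (2 * N) := by
  have hG : ∀ᶠ y in nhds x, HasFDerivAt (fun z => w z + ε * @inner ℝ _ _ z z)
      (fderiv ℝ w y + (2 * ε) • (innerSL ℝ y)) y := by
    filter_upwards [ev_hasFDerivAt hw] with y hy
    exact hy.add (hasFDerivAt_quad ε y)
  have hG' : ∀ i : Fin N, HasFDerivAt
      (fun y => (fderiv ℝ w y + (2 * ε) • (innerSL ℝ y)) (EuclideanSpace.single i 1))
      ((ContinuousLinearMap.apply ℝ ℝ (EuclideanSpace.single i 1)).comp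
          (fderiv ℝ (fderiv ℝ w) x)
        + (2 * ε) • (innerSL ℝ (EuclideanSpace.single i 1))) x := by
    intro i
    set e : EuclideanSpace ℝ (Fin N) := EuclideanSpace.single i 1 with he
    have h1 : HasFDerivAt (fun y : E => ((2 * ε) • (innerSL ℝ y)) e)
        ((2 * ε) • (innerSL ℝ e)) x := by
      have h2 := ((innerSL ℝ e).hasFDerivAt (x := x)).const_mul (2 * ε)
      have h3 : (fun y : E => (2 * ε) * (innerSL ℝ e) y)
          = fun y : E => ((2 * ε) • (innerSL ℝ y)) e := by
        funext z
        simp only [ContinuousLinearMap.smul_apply, innerSL_apply_apply, smul_eq_mul]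
        rw [real_inner_comm]
      rwa [h3] at h2
    exact (hasFDerivAt_fderiv_apply hw e).add h1
  rw [lap_eq_sum hG hG', lap_eq_second hw]
  have : ∀ i : Fin N,
      ((ContinuousLinearMap.apply ℝ ℝ (EuclideanSpace.single i 1)).comp
          (fderiv ℝ (fderiv ℝ w) x)
        + (2 * ε) • (innerSL ℝ (EuclideanSpace.single i (1:ℝ))))
        (EuclideanSpace.single i 1)
      = fderiv ℝ (fderiv ℝ w) x (EuclideanSpace.single i 1) (EuclideanSpace.single i 1)
        + 2 * ε := by
    intro i
    have hinner : @inner ℝ _ _ (EuclideanSpace.single i (1:ℝ)) (EuclideanSpace.single i (1:ℝ))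
        = 1 := by
      rw [real_inner_self_eq_norm_sq, EuclideanSpace.norm_single]
      norm_num
    simp [hinner]
  rw [Finset.sum_congr rfl fun i _ => this i, Finset.sum_add_distrib]
  simp [Finset.card_univ]
  ring


lemma max_principle (hN : 1 ≤ N) {Ω : Set E} (hΩo : IsOpen Ω) (hΩb : Bornology.IsBounded Ω)
    {w : E → ℝ} (hw2 : ∀ x ∈ Ω, ContDiffAt ℝ 2 w x) (hwc : ContinuousOn w (closure Ω))
    (hwb : ∀ x ∈ frontier Ω, w x ≤ 0) (hsub : ∀ x ∈ Ω, 0 < w x → 0 ≤ lap w x) :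
    ∀ x ∈ Ω, w x ≤ 0 := by
  intro xb hxb
  by_contra hpos
  push_neg at hpos
  obtain ⟨r, hr⟩ := hΩb.subset_closedBall 0
  set R : ℝ := max r 1 with hR
  have hR1 : (1:ℝ) ≤ R := le_max_right r 1
  have hRpos : (0:ℝ) < R := lt_of_lt_of_le one_pos hR1
  have hbound : ∀ y ∈ closure Ω, @inner ℝ _ _ y y ≤ R ^ 2 := by
    intro y hy
    have h1 : y ∈ Metric.closedBall (0:E) R :=
      (closure_minimal (hr.trans (Metric.closedBall_subset_closedBall (le_max_left r 1)))
        Metric.isClosed_closedBall) hy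
    rw [Metric.mem_closedBall, dist_zero_right] at h1
    rw [real_inner_self_eq_norm_sq]
    exact pow_le_pow_left₀ (norm_nonneg y) h1 2
  set ε : ℝ := w xb / (2 * R ^ 2) with hε
  have hεpos : 0 < ε := by positivity
  have hεR : ε * R ^ 2 = w xb / 2 := by
    rw [hε]
    field_simp
  set W : E → ℝ := fun y => w y + ε * @inner ℝ _ _ y y with hW
  have hWc : ContinuousOn W (closure Ω) :=
    hwc.add ((continuous_const.mul
      (continuous_inner.comp (continuous_id.prodMk continuous_id))).continuousOn)
  have hcomp : IsCompact (closure Ω) := hΩb.isCompact_closure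
  obtain ⟨x₀, hx₀, hmax⟩ := hcomp.exists_isMaxOn ⟨xb, subset_closure hxb⟩ hWc
  have hkey : w xb ≤ W x₀ := by
    have h1 : w xb ≤ W xb := by
      have h2 : (0:ℝ) ≤ @inner ℝ _ _ xb xb := real_inner_self_nonneg
      have h3 : W xb = w xb + ε * @inner ℝ _ _ xb xb := rfl
      nlinarith
    exact h1.trans (hmax (subset_closure hxb))
  have hsmall : ∀ y ∈ closure Ω, w y ≤ 0 → ¬ (w xb ≤ W y) := by
    intro y hy hwy hle
    have h2 := hbound y hy
    have h3 : W y = w y + ε * @inner ℝ _ _ y y := rfl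
    nlinarith
  have hx₀Ω : x₀ ∈ Ω := by
    by_contra h
    have hfr : x₀ ∈ frontier Ω := by
      rw [frontier, hΩo.interior_eq]
      exact ⟨hx₀, h⟩
    exact hsmall x₀ hx₀ (hwb x₀ hfr) hkey
  have hwx₀ : 0 < w x₀ := by
    by_contra h
    push_neg at h
    exact hsmall x₀ hx₀ h hkey
  have hlapw := hsub x₀ hx₀Ω hwx₀
  have hCD : ContDiffAt ℝ 2 w x₀ := hw2 x₀ hx₀Ω
  have hlmax : IsLocalMax W x₀ :=
    hmax.isLocalMax (mem_nhds_iff.2 ⟨Ω, subset_closure, hΩo, hx₀Ω⟩)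
  have hCDW : ContDiffAt ℝ 2 W x₀ :=
    hCD.add (contDiffAt_const.mul (contDiffAt_id.inner ℝ contDiffAt_id))
  have h0 := lap_nonpos_of_isLocalMax hCDW hlmax
  rw [show W = fun y => w y + ε * @inner ℝ _ _ y y from rfl] at h0
  rw [lap_perturb hCD ε] at h0
  have hN' : (1:ℝ) ≤ N := by exact_mod_cast hN
  nlinarith

end aux

set_option maxHeartbeats 1000000 in
/-- Souplet-type pointwise comparison estimate. -/
theorem stmt3 {N : ℕ} (hN : 1 ≤ N) (Ω : Set (EuclideanSpace ℝ (Fin N)))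
    (hΩo : IsOpen Ω) (hΩb : Bornology.IsBounded Ω)
    (lam gam p θ : ℝ) (hlam : 0 < lam) (hgam : 0 < gam) (hp : 1 < p) (hpθ : p ≤ θ)
    (u v : EuclideanSpace ℝ (Fin N) → ℝ)
    (hu2 : ContDiffOn ℝ 2 u Ω) (hv2 : ContDiffOn ℝ 2 v Ω)
    (huc : ContinuousOn u (closure Ω)) (hvc : ContinuousOn v (closure Ω))
    (hupos : ∀ x ∈ Ω, 0 ≤ u x) (hvpos : ∀ x ∈ Ω, 0 ≤ v x)
    (hub : ∀ x ∈ frontier Ω, u x = 0) (hvb : ∀ x ∈ frontier Ω, v x = 0)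
    (heq1 : ∀ x ∈ Ω, -lap u x = lam * (v x + 1) ^ p)
    (heq2 : ∀ x ∈ Ω, -lap v x = gam * (u x + 1) ^ θ)
    (α : ℝ) (hα : α = max 0 ((gam * (p + 1) / (lam * (θ + 1))) ^ (1 / (p + 1)) - 1)) :
    ∀ x ∈ Ω,
      (v x + 1 + α) ^ (p + 1) ≥ gam * (p + 1) / (lam * (θ + 1)) * (u x + 1) ^ (θ + 1) := by
  have hp0 : 0 < p := lt_trans one_pos hp
  have hp1 : 0 < p + 1 := by linarith
  have hθ1 : 0 < θ + 1 := by linarith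
  set Kr : ℝ := gam * (p + 1) / (lam * (θ + 1)) with hKr
  have hKrpos : 0 < Kr := div_pos (mul_pos hgam hp1) (mul_pos hlam hθ1)
  set σ : ℝ := (θ + 1) / (p + 1) with hσ
  have hσ1 : 1 ≤ σ := by rw [hσ, le_div_iff₀ hp1]; linarith
  have hσpos : 0 < σ := lt_of_lt_of_le one_pos hσ1
  set δ : ℝ := Kr ^ (1 / (p + 1)) with hδ
  have hδpos : 0 < δ := Real.rpow_pos_of_pos hKrpos _
  have hδp : δ ^ (p + 1) = Kr := by
    rw [hδ, ← Real.rpow_mul hKrpos.le, one_div_mul_cancel (ne_of_gt hp1), Real.rpow_one]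
  have hα0 : 0 ≤ α := by rw [hα]; exact le_max_left _ _
  have hαδ : δ - 1 ≤ α := by rw [hα]; exact le_max_right _ _
  set w : EuclideanSpace ℝ (Fin N) → ℝ := fun y => δ * (u y + 1) ^ σ - (v y + 1 + α) with hwdef
  suffices hwle : ∀ x ∈ Ω, w x ≤ 0 by
    intro x hx
    have hu1 : (0:ℝ) < u x + 1 := by have := hupos x hx; linarith
    have h1 : δ * (u x + 1) ^ σ ≤ v x + 1 + α := by
      have h0 : δ * (u x + 1) ^ σ - (v x + 1 + α) ≤ 0 := hwle x hx
      linarith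
    have h2 : (0:ℝ) ≤ δ * (u x + 1) ^ σ :=
      le_of_lt (mul_pos hδpos (Real.rpow_pos_of_pos hu1 σ))
    have h3 := Real.rpow_le_rpow h2 h1 (le_of_lt hp1)
    rw [Real.mul_rpow hδpos.le (Real.rpow_pos_of_pos hu1 σ).le, hδp,
      ← Real.rpow_mul hu1.le] at h3
    have hσp : σ * (p + 1) = θ + 1 := by rw [hσ]; field_simp
    rw [hσp] at h3
    exact h3
  apply max_principle hN hΩo hΩb
  · -- smoothness
    intro x hx
    have hu1 : u x + 1 ≠ 0 := by have := hupos x hx; positivity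
    exact (contDiffAt_const.mul
        (((hu2.contDiffAt (hΩo.mem_nhds hx)).add contDiffAt_const).rpow_const_of_ne hu1)).sub
      (((hv2.contDiffAt (hΩo.mem_nhds hx)).add contDiffAt_const).add contDiffAt_const)
  · -- continuity on closure
    exact (continuousOn_const.mul
        ((huc.add continuousOn_const).rpow_const (fun y _ => Or.inr hσpos.le))).sub
      (((hvc.add continuousOn_const).add continuousOn_const))
  · -- boundary
    intro x hx
    have h1 : w x = δ * (u x + 1) ^ σ - (v x + 1 + α) := rfl
    rw [h1, hub x hx, hvb x hx]
    have : ((0:ℝ) + 1) ^ σ = 1 := by rw [zero_add, Real.one_rpow]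
    rw [this]
    linarith
  · -- subharmonicity where w > 0
    intro x hx hwx
    have hxmem := hΩo.mem_nhds hx
    have hu1 : (0:ℝ) < u x + 1 := by have := hupos x hx; linarith
    have hv1 : (0:ℝ) < v x + 1 := by have := hvpos x hx; linarith
    have hcu : ContDiffAt ℝ 2 u x := hu2.contDiffAt hxmem
    have hcv : ContDiffAt ℝ 2 v x := hv2.contDiffAt hxmem
    set G : EuclideanSpace ℝ (Fin N) → EuclideanSpace ℝ (Fin N) →L[ℝ] ℝ :=
      fun y => δ • ((σ * (u y + 1) ^ (σ - 1)) • fderiv ℝ u y) - fderiv ℝ v y with hG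
    have hGev : ∀ᶠ y in nhds x, HasFDerivAt w (G y) y := by
      filter_upwards [ev_hasFDerivAt hcu, ev_hasFDerivAt hcv, hΩo.eventually_mem hx]
        with y hyu hyv hyΩ
      have hy1 : u y + 1 ≠ 0 := by have := hupos y hyΩ; positivity
      exact (((hyu.add_const 1).rpow_const (Or.inl hy1)).const_mul δ).sub
        ((hyv.add_const 1).add_const α)
    have hsc : HasFDerivAt (fun y => σ * (u y + 1) ^ (σ - 1))
        (σ • (((σ - 1) * (u x + 1) ^ (σ - 1 - 1)) • fderiv ℝ u x)) x :=
      ((((hcu.differentiableAt two_ne_zero).hasFDerivAt).add_const 1).rpow_const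
        (Or.inl (ne_of_gt hu1))).const_mul σ
    have hG' : ∀ i : Fin N, HasFDerivAt
        (fun y => G y (EuclideanSpace.single i 1))
        (δ • (((σ * (u x + 1) ^ (σ - 1)) •
            ((ContinuousLinearMap.apply ℝ ℝ (EuclideanSpace.single i 1)).comp
              (fderiv ℝ (fderiv ℝ u) x)))
          + (fderiv ℝ u x (EuclideanSpace.single i 1)) •
              (σ • (((σ - 1) * (u x + 1) ^ (σ - 1 - 1)) • fderiv ℝ u x)))
          - (ContinuousLinearMap.apply ℝ ℝ (EuclideanSpace.single i 1)).comp
              (fderiv ℝ (fderiv ℝ v) x)) x := by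
      intro i
      have h1 := ((hsc.mul (hasFDerivAt_fderiv_apply hcu (EuclideanSpace.single i 1))).const_mul
        δ).sub (hasFDerivAt_fderiv_apply hcv (EuclideanSpace.single i 1))
      have h2 : (fun y => G y (EuclideanSpace.single i 1))
          = fun y => δ * ((σ * (u y + 1) ^ (σ - 1)) * fderiv ℝ u y (EuclideanSpace.single i 1))
            - fderiv ℝ v y (EuclideanSpace.single i 1) := by
        funext z
        simp [hG, ContinuousLinearMap.smul_apply, smul_eq_mul]
      rw [h2]
      exact h1
    set S : ℝ := ∑ i : Fin N, (fderiv ℝ u x (EuclideanSpace.single i 1)) ^ 2 with hS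
    have hSnn : 0 ≤ S := Finset.sum_nonneg fun i _ => sq_nonneg _
    have hsum : lap w x = δ * (σ * (u x + 1) ^ (σ - 1)) * lap u x
        + (δ * σ * (σ - 1) * (u x + 1) ^ (σ - 1 - 1)) * S - lap v x := by
      rw [lap_eq_sum hGev hG', lap_eq_second hcu, lap_eq_second hcv, hS]
      rw [Finset.mul_sum, Finset.mul_sum, ← Finset.sum_add_distrib, ← Finset.sum_sub_distrib]
      refine Finset.sum_congr rfl fun i _ => ?_
      simp only [ContinuousLinearMap.sub_apply, ContinuousLinearMap.smul_apply,
        ContinuousLinearMap.add_apply, ContinuousLinearMap.comp_apply,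
        ContinuousLinearMap.apply_apply, smul_eq_mul]
      ring
    have hlapu : lap u x = -(lam * (v x + 1) ^ p) := by
      have := heq1 x hx; linarith
    have hlapv : lap v x = -(gam * (u x + 1) ^ θ) := by
      have := heq2 x hx; linarith
    rw [hsum, hlapu, hlapv]
    have hterm1 : 0 ≤ (δ * σ * (σ - 1) * (u x + 1) ^ (σ - 1 - 1)) * S := by
      have := Real.rpow_pos_of_pos hu1 (σ - 1 - 1)
      have h1 : (0:ℝ) ≤ σ - 1 := by linarith
      positivity
    have hkey : δ * (σ * (u x + 1) ^ (σ - 1)) * (lam * (v x + 1) ^ p) ≤ gam * (u x + 1) ^ θ := by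
      have h5 : v x + 1 ≤ δ * (u x + 1) ^ σ := by
        have h0' : (0:ℝ) < δ * (u x + 1) ^ σ - (v x + 1 + α) := hwx
        linarith
      have h6 : (v x + 1) ^ p ≤ (δ * (u x + 1) ^ σ) ^ p :=
        Real.rpow_le_rpow hv1.le h5 hp0.le
      have h7 : (δ * (u x + 1) ^ σ) ^ p = δ ^ p * (u x + 1) ^ (σ * p) := by
        rw [Real.mul_rpow hδpos.le (Real.rpow_pos_of_pos hu1 σ).le, ← Real.rpow_mul hu1.le]
      have h8 : (u x + 1) ^ (σ - 1) * (u x + 1) ^ (σ * p) = (u x + 1) ^ θ := by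
        rw [← Real.rpow_add hu1]
        congr 1
        rw [hσ]
        field_simp
        ring
      have h9 : δ * δ ^ p = Kr := by
        rw [← hδp, Real.rpow_add_one (ne_of_gt hδpos) p]
        ring
      have h10 : σ * lam * Kr = gam := by
        rw [hσ, hKr]
        field_simp
      calc δ * (σ * (u x + 1) ^ (σ - 1)) * (lam * (v x + 1) ^ p)
          ≤ δ * (σ * (u x + 1) ^ (σ - 1)) * (lam * (δ ^ p * (u x + 1) ^ (σ * p))) := by
            have hnn : 0 ≤ δ * (σ * (u x + 1) ^ (σ - 1)) * lam := by
              have := Real.rpow_pos_of_pos hu1 (σ - 1)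
              positivity
            rw [← h7]
            calc δ * (σ * (u x + 1) ^ (σ - 1)) * (lam * (v x + 1) ^ p)
                = (δ * (σ * (u x + 1) ^ (σ - 1)) * lam) * (v x + 1) ^ p := by ring
              _ ≤ (δ * (σ * (u x + 1) ^ (σ - 1)) * lam) * (δ * (u x + 1) ^ σ) ^ p :=
                  mul_le_mul_of_nonneg_left h6 hnn
              _ = δ * (σ * (u x + 1) ^ (σ - 1)) * (lam * (δ * (u x + 1) ^ σ) ^ p) := by ring
        _ = (σ * lam * (δ * δ ^ p)) * ((u x + 1) ^ (σ - 1) * (u x + 1) ^ (σ * p)) := by ring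
        _ = gam * (u x + 1) ^ θ := by rw [h8, h9, h10]
    linarith [hkey, hterm1]
end
end

section
/- Let θ ≥ p > 1 and let t₀ := √(pθ(p+1)/(θ+1)) + √(pθ(p+1)/(θ+1) − √(pθ(p+1)/(θ+1))). Then 2t₀(θ+1)/(pθ−1) > 4. -/
/-!
The claim is `c < t₀` for `c := 2(pθ - 1)/(θ + 1)`. With `A := pθ(p + 1)/(θ + 1) > 1` and
`s := √A` we have `t₀ = s + √(s² - s)`, and `√(s² - s) ≥ s - 3/4` as soon as `s ≥ 9/8`, so
`t₀ ≥ 2s - 3/4`. Clearing denominators, `4A - (c + 3/4)²` is a positive multiple of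
`64p²θ + 16pθ² + 144pθ - 9θ² + 30θ - 25 > 0`, hence `2s > c + 3/4`. The bound `s ≥ 9/8` holds
when `c > 1`; when `c ≤ 1`, already `t₀ ≥ s > 1 ≥ c`.
-/

theorem lt_sqrt_add_sqrt_sub_sqrt {A c : ℝ} (hA : 81 / 64 ≤ A) (hc : (c + 3 / 4) ^ 2 < 4 * A) :
    c < √A + √(A - √A) := by
  set s := √A
  have hs : s ^ 2 = A := Real.sq_sqrt (by linarith)
  have hs_ge : 9 / 8 ≤ s := (Real.le_sqrt (by norm_num) (by linarith)).2 (by linarith)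
  have hcs : c + 3 / 4 < 2 * s :=
    (le_abs_self _).trans_lt (abs_lt_of_sq_lt_sq (by linarith) (by linarith))
  have hroot : s - 3 / 4 ≤ √(A - s) :=
    (Real.le_sqrt (by linarith) (by nlinarith)).2 (by nlinarith)
  linarith

section

variable {p θ : ℝ}

theorem one_lt_mul_mul_add_one_div_add_one (hp : 1 < p) (hpθ : p ≤ θ) :
    1 < p * θ * (p + 1) / (θ + 1) := by
  have hθ : 1 < θ := hp.trans_le hpθ
  rw [one_lt_div (by linarith)]
  nlinarith [mul_lt_mul_of_pos_right hp (by linarith : (0 : ℝ) < θ)]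

theorem three_halves_le_mul_mul_add_one_div_add_one (hp : 1 ≤ p) (hθ : 0 ≤ θ)
    (hc : 1 < 2 * (p * θ - 1) / (θ + 1)) : 3 / 2 ≤ p * θ * (p + 1) / (θ + 1) := by
  rw [one_lt_div (by linarith)] at hc
  rw [le_div_iff₀ (by linarith)]
  nlinarith [mul_le_mul_of_nonneg_right hp hθ]

theorem sq_add_three_quarters_lt (hp : 1 ≤ p) (hθ : 1 ≤ θ) :
    (2 * (p * θ - 1) / (θ + 1) + 3 / 4) ^ 2 < 4 * (p * θ * (p + 1) / (θ + 1)) := by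
  have hθ₁ : 0 < θ + 1 := by linarith
  have key : (8 * (p * θ) + 3 * θ - 5) ^ 2 < 64 * (p * θ * (p + 1) * (θ + 1)) := by
    nlinarith [mul_le_mul_of_nonneg_right hp (by positivity : (0 : ℝ) ≤ θ ^ 2),
      mul_le_mul_of_nonneg_right hp (by positivity : (0 : ℝ) ≤ θ), sq_nonneg p]
  have hl : 2 * (p * θ - 1) / (θ + 1) + 3 / 4 = (8 * (p * θ) + 3 * θ - 5) / (4 * (θ + 1)) := by
    field_simp
    ring
  have hr : 4 * (p * θ * (p + 1) / (θ + 1)) =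
      64 * (p * θ * (p + 1) * (θ + 1)) / (4 * (θ + 1)) ^ 2 := by
    field_simp
    ring
  rw [hl, hr, div_pow]
  exact div_lt_div_of_pos_right key (by positivity)

end

/-- for `θ ≥ p > 1`, `2t₀(θ+1)/(pθ−1) > 4`. -/
theorem stmt15 (p θ t₀ : ℝ) (hp : 1 < p) (hpθ : p ≤ θ)
    (ht₀ : t₀ = Real.sqrt (p * θ * (p + 1) / (θ + 1)) +
      Real.sqrt (p * θ * (p + 1) / (θ + 1) - Real.sqrt (p * θ * (p + 1) / (θ + 1)))) :
    2 * t₀ * (θ + 1) / (p * θ - 1) > 4 := by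
  have hθ : 1 < θ := hp.trans_le hpθ
  have hq : 0 < p * θ - 1 := by nlinarith
  suffices hc : 2 * (p * θ - 1) / (θ + 1) < t₀ by
    rw [div_lt_iff₀ (by linarith)] at hc
    rw [gt_iff_lt, lt_div_iff₀ hq]
    linarith
  rw [ht₀]
  rcases le_or_gt (2 * (p * θ - 1) / (θ + 1)) 1 with hc | hc
  · have hA := one_lt_mul_mul_add_one_div_add_one hp hpθ
    calc 2 * (p * θ - 1) / (θ + 1) ≤ 1 := hc
      _ < Real.sqrt (p * θ * (p + 1) / (θ + 1)) := by rwa [Real.lt_sqrt zero_le_one, one_pow]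
      _ ≤ _ := le_add_of_nonneg_right (Real.sqrt_nonneg _)
  · have hA := three_halves_le_mul_mul_add_one_div_add_one hp.le (by linarith) hc
    exact lt_sqrt_add_sqrt_sub_sqrt (by linarith) (sq_add_three_quarters_lt hp.le hθ.le)
end
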